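/- Consider the Game of Graph Nim on the graph with vertices A, B, C, D, E and edges AB, AC, AD, BE (a star at A with the extra edge BE attached at B). Every configuration in which all four edge weights are strictly positive is a winning position for the first player. -/
import Mathlib


namespace GraphNim

variable {V E : Type} [Fintype E]

/-- A legal move in the Game of Graph Nim: choose a vertex `v` and weakly decrease
the weights of edges incident to `v` (all other edges unchanged), strictly
decreasing the total weight. -/
def Move (inc : V → E → Prop) (w w' : E → ℕ) : Prop :=
  ∃ v : V, (∀ e, w' e ≤ w e) ∧ (∀ e, ¬ inc v e → w' e = w e) ∧
    (∑ e, w' e) < (∑ e, w e)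

/-- A configuration is losing for the player to move: every legal move leads to a
non-losing configuration (the all-zero configuration is vacuously losing). -/
def Losing (inc : V → E → Prop) (w : E → ℕ) : Prop :=
  ∀ w', Move inc w w' → ¬ Losing inc w'
termination_by ∑ e, w e
decreasing_by
  rename_i h
  obtain ⟨v, _, _, h3⟩ := h
  exact h3

/-- A configuration is winning for the player to move: some legal move leads to a
losing configuration. -/
def Winning (inc : V → E → Prop) (w : E → ℕ) : Prop :=
  ∃ w', Move inc w w' ∧ Losing inc w'

end GraphNim

open GraphNim

/-- Endpoints of the edges of the graph `G₂`: vertices `A = 0, B = 1, C = 2, D = 3,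
E = 4`, edges `AB = 0, AC = 1, AD = 2, BE = 3`. -/
def g2Ends : Fin 4 → Fin 5 × Fin 5
  | 0 => (0, 1)
  | 1 => (0, 2)
  | 2 => (0, 3)
  | 3 => (1, 4)

def g2Inc (v : Fin 5) (e : Fin 4) : Prop := (g2Ends e).1 = v ∨ (g2Ends e).2 = v

instance (v : Fin 5) (e : Fin 4) : Decidable (g2Inc v e) := by
  unfold g2Inc; infer_instance

lemma g2_exists_move (w : Fin 4 → ℕ) (hP : ¬ (w 0 = 0 ∧ w 3 = w 1 + w 2)) :
    ∃ w', Move g2Inc w w' ∧ w' 0 = 0 ∧ w' 3 = w' 1 + w' 2 := by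
  by_cases hc : w 3 ≤ w 1 + w 2
  · refine ⟨![0, min (w 1) (w 3), w 3 - min (w 1) (w 3), w 3], ⟨0, ?_, ?_, ?_⟩, by simp, ?_⟩
    · intro e; fin_cases e <;> simp <;> omega
    · intro e he; fin_cases e
      · exact absurd (by decide : g2Inc 0 0) he
      · exact absurd (by decide : g2Inc 0 1) he
      · exact absurd (by decide : g2Inc 0 2) he
      · simp
    · simp [Fin.sum_univ_four] <;> omega
    · simp <;> omega
  · refine ⟨![0, w 1, w 2, w 1 + w 2], ⟨1, ?_, ?_, ?_⟩, by simp, by simp⟩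
    · intro e; fin_cases e <;> simp <;> omega
    · intro e he; fin_cases e
      · exact absurd (by decide : g2Inc 1 0) he
      · simp
      · simp
      · exact absurd (by decide : g2Inc 1 3) he
    · simp [Fin.sum_univ_four] <;> omega

lemma g2_char (n : ℕ) : ∀ w : Fin 4 → ℕ, (∑ e, w e) = n →
    (Losing g2Inc w ↔ (w 0 = 0 ∧ w 3 = w 1 + w 2)) := by
  induction n using Nat.strong_induction_on with
  | _ n ih =>
    intro w hw
    constructor
    · intro hL
      by_contra hP
      obtain ⟨w', hm, hP'⟩ := g2_exists_move w hP
      have hlt : (∑ e, w' e) < ∑ e, w e := by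
        obtain ⟨v, _, _, h3⟩ := hm; exact h3
      have hL' : Losing g2Inc w' :=
        ((ih _ (hw ▸ hlt) w' rfl).mpr hP')
      rw [Losing] at hL
      exact hL w' hm hL'
    · rintro ⟨h0, h3⟩
      rw [Losing]
      rintro w' ⟨v, hle, hfix, hlt⟩ hL'
      have hP' := (ih _ (hw ▸ hlt) w' rfl).mp hL'
      obtain ⟨h0', h3'⟩ := hP'
      have e0 := hle 0; have e1 := hle 1; have e2 := hle 2; have e3 := hle 3
      rw [Fin.sum_univ_four, Fin.sum_univ_four] at hlt
      fin_cases v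
      · have := hfix 3 (by decide); omega
      · have := hfix 1 (by decide); have := hfix 2 (by decide); omega
      · have := hfix 0 (by decide); have := hfix 2 (by decide)
        have := hfix 3 (by decide); omega
      · have := hfix 0 (by decide); have := hfix 1 (by decide)
        have := hfix 3 (by decide); omega
      · have := hfix 0 (by decide); have := hfix 1 (by decide)
        have := hfix 2 (by decide); omega

/-- On `G₂` (star at `A` with edges `AB, AC, AD` plus an edge `BE`), every
configuration with all edge weights positive is winning for the first player. -/
theorem g2_winning (w : Fin 4 → ℕ) (hpos : ∀ e, 0 < w e) :
    Winning g2Inc w := by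
  have h0 := hpos 0
  obtain ⟨w', hm, hP'⟩ := g2_exists_move w (by omega)
  exact ⟨w', hm, (g2_char _ w' rfl).mpr hP'⟩
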